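/- arXiv:2601.01417 — 2 statements merged into one kernel-verified Lean document; each statement's English description precedes it below -/
import Mathlib

section
/- Let w ∈ ℝᵈ with w_ℓ ≠ 0 for some ℓ ≥ r+1, and let w_min ≤ |w_i| ≤ w_max for all i with w_i ≠ 0, where w_min > 0, and set W = w_max/w_min ≥ 1. Define x_i = -r·(2W)^(i-r) for r+1 ≤ i ≤ d. Then for any x₁,…,x_r ∈ [0,1], |Σ_{i=1}^{ℓ-1} x_i w_i| < |x_ℓ w_ℓ|, assuming w_i = 0 for i > ℓ in the truncated sum and that ℓ is the largest index with w_ℓ ≠ 0. -/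
/-! With `q = 2W`, the inputs `x₁, …, x_r ∈ [0, 1]` contribute at most `r · wmax` in total and the
term of index `r + j` at most `r · wmax · q ^ j`, so the whole sum is at most
`r · wmax · (1 + q + ⋯ + q ^ (ℓ - r - 1)) = r · wmin · W · (q ^ (ℓ - r) - 1) / (q - 1)`.
Since `W ≤ q - 1`, this is less than `r · wmin · q ^ (ℓ - r) ≤ |x_ℓ w_ℓ|`. -/

open Finset

theorem mul_geom_sum_lt_pow {α : Type*} [CommRing α] [LinearOrder α] [IsStrictOrderedRing α]
    {c q : α} (hc : 0 ≤ c) (hcq : c + 1 ≤ q) (n : ℕ) :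
    c * ∑ j ∈ range n, q ^ j < q ^ n := by
  have hS : 0 ≤ ∑ j ∈ range n, q ^ j :=
    sum_nonneg fun j _ => pow_nonneg (by linarith) j
  calc c * ∑ j ∈ range n, q ^ j ≤ (q - 1) * ∑ j ∈ range n, q ^ j :=
        mul_le_mul_of_nonneg_right (by linarith) hS
    _ = q ^ n - 1 := by rw [mul_comm, geom_sum_mul]
    _ < q ^ n := sub_one_lt _

theorem sum_Icc_le_mul_geom_sum {α : Type*} [Semiring α] [PartialOrder α] [IsOrderedRing α]
    (f : ℕ → α) {a q : α} {r m : ℕ} (hhead : ∀ i ∈ Icc 1 r, f i ≤ a)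
    (htail : ∀ j ∈ Icc 1 m, f (r + j) ≤ r * a * q ^ j) :
    ∑ i ∈ Icc 1 (r + m), f i ≤ r * a * ∑ j ∈ range (m + 1), q ^ j := by
  have hsplit : ∑ i ∈ Icc 1 (r + m), f i
      = ∑ i ∈ Icc 1 r, f i + ∑ j ∈ range m, f (r + j + 1) := by
    rw [← Ico_add_one_right_eq_Icc, sum_Ico_eq_sum_range, Nat.add_sub_cancel, sum_range_add,
      ← Ico_add_one_right_eq_Icc, sum_Ico_eq_sum_range, Nat.add_sub_cancel]
    simp only [add_comm 1]
  have hhead' : ∑ i ∈ Icc 1 r, f i ≤ r * a := by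
    simpa [nsmul_eq_mul] using sum_le_card_nsmul _ _ _ hhead
  have htail' : ∑ j ∈ range m, f (r + j + 1) ≤ ∑ j ∈ range m, r * a * q ^ (j + 1) :=
    sum_le_sum fun j hj => htail (j + 1) (by simp only [mem_range, mem_Icc] at hj ⊢; omega)
  calc ∑ i ∈ Icc 1 (r + m), f i ≤ r * a + ∑ j ∈ range m, r * a * q ^ (j + 1) := by
        rw [hsplit]; exact add_le_add hhead' htail'
    _ = r * a * ∑ j ∈ range (m + 1), q ^ j := by
        rw [sum_range_succ', mul_add, mul_sum]; simp [add_comm]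

theorem sum_abs_mul_le_mul_geom_sum {x w : ℕ → ℝ} {q wmax : ℝ} {d r m : ℕ} (hmd : r + m ≤ d)
    (hw : ∀ i, 1 ≤ i → i ≤ d → |w i| ≤ wmax) (hhead : ∀ i, 1 ≤ i → i ≤ r → |x i| ≤ 1)
    (htail : ∀ j, 1 ≤ j → r + j ≤ d → |x (r + j)| ≤ r * q ^ j) :
    ∑ i ∈ Icc 1 (r + m), |x i * w i| ≤ r * wmax * ∑ j ∈ range (m + 1), q ^ j := by
  refine sum_Icc_le_mul_geom_sum _ (fun i hi => ?_) (fun j hj => ?_)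
  · rw [mem_Icc] at hi
    rw [abs_mul, ← one_mul wmax]
    exact mul_le_mul (hhead i hi.1 hi.2) (hw i hi.1 (by omega)) (abs_nonneg _) zero_le_one
  · rw [mem_Icc] at hj
    have hxj := htail j hj.1 (by omega)
    rw [abs_mul, mul_right_comm]
    exact mul_le_mul hxj (hw _ (by omega) (by omega)) (abs_nonneg _) ((abs_nonneg _).trans hxj)

theorem ell_term_dominates_general (d r ℓ : ℕ) (hr : 1 ≤ r) (hrℓ : r + 1 ≤ ℓ) (hℓd : ℓ ≤ d)
    (w : ℕ → ℝ) (wmin wmax W : ℝ) (hwmin : 0 < wmin) (hW : W = wmax / wmin) (hW1 : 1 ≤ W)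
    (hbounds : ∀ i, 1 ≤ i → i ≤ d → w i ≠ 0 → wmin ≤ |w i| ∧ |w i| ≤ wmax)
    (hwℓ : w ℓ ≠ 0)
    (x : ℕ → ℝ)
    (hxneg : ∀ i, r + 1 ≤ i → i ≤ d → x i = -(r : ℝ) * (2 * W) ^ (i - r))
    (hxbox : ∀ i, 1 ≤ i → i ≤ r → x i ∈ Set.Icc (0 : ℝ) 1) :
    |∑ i ∈ Finset.Icc 1 (ℓ - 1), x i * w i| < |x ℓ * w ℓ| := by
  obtain ⟨m, rfl⟩ : ∃ m, ℓ = r + (m + 1) := ⟨ℓ - r - 1, by omega⟩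
  have hwℓ_bounds := hbounds _ (by omega) hℓd hwℓ
  have hw : ∀ i, 1 ≤ i → i ≤ d → |w i| ≤ wmax := fun i h1 h2 => by
    by_cases h : w i = 0
    · simpa [h] using (abs_nonneg _).trans hwℓ_bounds.2
    · exact (hbounds i h1 h2 h).2
  have hx : ∀ j, 1 ≤ j → r + j ≤ d → |x (r + j)| = r * (2 * W) ^ j := fun j h1 h2 => by
    rw [hxneg _ (by omega) h2, abs_mul, abs_neg, Nat.abs_cast, Nat.add_sub_cancel_left,
      abs_of_nonneg (by positivity)]
  have hhead : ∀ i, 1 ≤ i → i ≤ r → |x i| ≤ 1 := fun i h1 h2 =>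
    abs_le.2 ⟨by linarith [(hxbox i h1 h2).1], (hxbox i h1 h2).2⟩
  have hsum := sum_abs_mul_le_mul_geom_sum (m := m) (by omega) hw hhead
    fun j h1 h2 => (hx j h1 h2).le
  have hwmax : wmax = W * wmin := by rw [hW]; field_simp
  calc |∑ i ∈ Icc 1 (r + (m + 1) - 1), x i * w i| ≤ ∑ i ∈ Icc 1 (r + m), |x i * w i| :=
        abs_sum_le_sum_abs _ _
    _ ≤ r * wmin * (W * ∑ j ∈ range (m + 1), (2 * W) ^ j) := by rw [hwmax] at hsum; linarith
    _ < r * wmin * (2 * W) ^ (m + 1) := by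
        gcongr
        exact mul_geom_sum_lt_pow (by linarith) (by linarith) (m + 1)
    _ ≤ |x (r + (m + 1)) * w (r + (m + 1))| := by
        rw [abs_mul, hx (m + 1) (by omega) hℓd, mul_right_comm]
        gcongr
        exact hwℓ_bounds.1

theorem ell_term_dominates (d r ℓ : ℕ) (hr : 1 ≤ r) (hrℓ : r + 1 ≤ ℓ) (hℓd : ℓ ≤ d)
    (w : ℕ → ℝ) (wmin wmax W : ℝ) (hwmin : 0 < wmin) (hW : W = wmax / wmin) (hW1 : 1 ≤ W)
    (hbounds : ∀ i, 1 ≤ i → i ≤ d → w i ≠ 0 → wmin ≤ |w i| ∧ |w i| ≤ wmax)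
    (hwℓ : w ℓ ≠ 0) (hlargest : ∀ i, ℓ < i → w i = 0)
    (x : ℕ → ℝ)
    (hxneg : ∀ i, r + 1 ≤ i → i ≤ d → x i = -(r : ℝ) * (2 * W) ^ (i - r))
    (hxbox : ∀ i, 1 ≤ i → i ≤ r → x i ∈ Set.Icc (0 : ℝ) 1) :
    |∑ i ∈ Finset.Icc 1 (ℓ - 1), x i * w i| < |x ℓ * w ℓ| :=
  ell_term_dominates_general d r ℓ hr hrℓ hℓd w wmin wmax W hwmin hW hW1 hbounds hwℓ x hxneg hxbox
end

section
/- Let w ∈ ℝᵈ, let ℓ be the largest index with w_ℓ ≠ 0, and suppose ℓ ≥ r+1. With x_i = -r·(2W)^(i-r) for r+1 ≤ i ≤ d (where W = w_max/w_min as above) and any x₁,…,x_r ∈ [0,1], the sign of Σ_{i=1}^d x_i w_i equals -sign(w_ℓ). -/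
/-!
The term `x_ℓ w_ℓ = -r (2W)^(ℓ-r) w_ℓ` dominates the sum. The terms beyond `ℓ` vanish, each
of the first `r` terms is at most `W w_min` in absolute value, and the `i`-th term for
`r < i < ℓ` is at most `r (2W)^(i-r) W w_min`. Since `W ≤ 2W - 1`, all of them together stay below
`r w_min (2W)^(ℓ-r) ≤ |x_ℓ w_ℓ|`, so the sum has the sign of `x_ℓ w_ℓ`, which is `-sign w_ℓ`.
-/

open Finset

lemma Real.sign_add_of_abs_lt {a b : ℝ} (h : |b| < |a|) : Real.sign (a + b) = Real.sign a := by
  rcases lt_trichotomy a 0 with ha | rfl | ha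
  · rw [abs_of_neg ha] at h
    rw [Real.sign_of_neg ha, Real.sign_of_neg (by linarith [le_abs_self b])]
  · exact absurd h (not_lt.2 (by simp))
  · rw [abs_of_pos ha] at h
    rw [Real.sign_of_pos ha, Real.sign_of_pos (by linarith [neg_abs_le b])]

lemma Real.sign_mul_of_pos {c y : ℝ} (hc : 0 < c) : Real.sign (c * y) = Real.sign y := by
  rcases lt_trichotomy y 0 with hy | rfl | hy
  · rw [Real.sign_of_neg hy, Real.sign_of_neg (mul_neg_of_pos_of_neg hc hy)]
  · simp
  · rw [Real.sign_of_pos hy, Real.sign_of_pos (mul_pos hc hy)]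

lemma sum_Icc_one_eq_add_of_eq_zero {M : Type*} [AddCommMonoid M] {a : ℕ → M} {m d : ℕ}
    (hmd : m + 1 ≤ d) (hzero : ∀ i, m + 1 < i → a i = 0) :
    ∑ i ∈ Icc 1 d, a i = ∑ i ∈ Icc 1 m, a i + a (m + 1) := by
  rw [← sum_Icc_succ_top (by omega)]
  refine (sum_subset (Icc_subset_Icc_right hmd) fun i hi hni => hzero i ?_).symm
  simp only [mem_Icc, not_and, not_le] at hi hni
  exact hni hi.1

-- Telescoping form of `c (q - 1) (1 + q + ⋯ + q ^ n) = c (q ^ (n + 1) - 1)`.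
lemma sum_abs_Icc_le_of_le_geometric {a : ℕ → ℝ} {c q : ℝ} {r n : ℕ}
    (hhead : ∑ i ∈ Icc 1 r, |a i| ≤ c * (q - 1))
    (htail : ∀ k < n, |a (r + k + 1)| ≤ c * (q - 1) * q ^ (k + 1)) :
    ∑ i ∈ Icc 1 (r + n), |a i| ≤ c * (q ^ (n + 1) - 1) := by
  induction n with
  | zero => simpa using hhead
  | succ n ih =>
    rw [← add_assoc, sum_Icc_succ_top (by omega)]
    linarith [ih fun k hk => htail k (hk.trans n.lt_succ_self), htail n n.lt_succ_self,
      show c * (q ^ (n + 1) - 1) + c * (q - 1) * q ^ (n + 1) = c * (q ^ (n + 1 + 1) - 1) by ring]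

lemma sum_abs_mul_le_card_mul {ι : Type*} {s : Finset ι} {x w : ι → ℝ} {B : ℝ}
    (hx : ∀ i ∈ s, |x i| ≤ 1) (hw : ∀ i ∈ s, |w i| ≤ B) :
    ∑ i ∈ s, |x i * w i| ≤ #s * B := by
  rw [← nsmul_eq_mul]
  refine sum_le_card_nsmul _ _ _ fun i hi => ?_
  rw [abs_mul]
  exact (mul_le_of_le_one_left (abs_nonneg _) (hx i hi)).trans (hw i hi)

lemma sum_abs_mul_Icc_le {x w : ℕ → ℝ} {r n : ℕ} {m W q : ℝ}
    (hm : 0 ≤ m) (hW : 0 ≤ W) (hWq : W ≤ q - 1)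
    (hxhead : ∀ i ∈ Icc 1 r, |x i| ≤ 1)
    (hxtail : ∀ k < n, x (r + k + 1) = -(r * q ^ (k + 1)))
    (hw : ∀ i ∈ Icc 1 (r + n), |w i| ≤ W * m) :
    ∑ i ∈ Icc 1 (r + n), |x i * w i| ≤ r * m * (q ^ (n + 1) - 1) := by
  have hq : 0 ≤ q := by linarith
  refine sum_abs_Icc_le_of_le_geometric ?_ fun k hk => ?_
  · calc ∑ i ∈ Icc 1 r, |x i * w i| ≤ #(Icc 1 r) * (W * m) :=
          sum_abs_mul_le_card_mul hxhead fun i hi => hw i (Icc_subset_Icc_right (by omega) hi)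
      _ = r * m * W := by simp only [Nat.card_Icc, Nat.add_sub_cancel]; ring
      _ ≤ r * m * (q - 1) := by gcongr
  · rw [hxtail k hk, abs_mul, abs_neg, abs_of_nonneg (by positivity)]
    calc (r : ℝ) * q ^ (k + 1) * |w (r + k + 1)| ≤ r * q ^ (k + 1) * (W * m) := by
          gcongr; exact hw _ (mem_Icc.2 ⟨by omega, by omega⟩)
      _ = r * m * W * q ^ (k + 1) := by ring
      _ ≤ r * m * (q - 1) * q ^ (k + 1) := by gcongr

theorem sign_determined_by_ell (d r ℓ : ℕ) (hr : 1 ≤ r) (hrℓ : r + 1 ≤ ℓ) (hℓd : ℓ ≤ d)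
    (w : ℕ → ℝ) (wmin wmax W : ℝ) (hwmin : 0 < wmin) (hW : W = wmax / wmin) (hW1 : 1 ≤ W)
    (hbounds : ∀ i, 1 ≤ i → i ≤ d → w i ≠ 0 → wmin ≤ |w i| ∧ |w i| ≤ wmax)
    (hwℓ : w ℓ ≠ 0) (hlargest : ∀ i, ℓ < i → w i = 0)
    (x : ℕ → ℝ)
    (hxneg : ∀ i, r + 1 ≤ i → i ≤ d → x i = -(r : ℝ) * (2 * W) ^ (i - r))
    (hxbox : ∀ i, 1 ≤ i → i ≤ r → x i ∈ Set.Icc (0 : ℝ) 1) :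
    Real.sign (∑ i ∈ Finset.Icc 1 d, x i * w i) = -Real.sign (w ℓ) := by
  obtain ⟨n, rfl⟩ : ∃ n, ℓ = r + n + 1 := ⟨ℓ - r - 1, by omega⟩
  set q := 2 * W
  set c := (r : ℝ) * wmin
  have hc : 0 < c := by positivity
  have hw : ∀ i ∈ Icc 1 d, |w i| ≤ W * wmin := by
    intro i hi
    rcases eq_or_ne (w i) 0 with h | h
    · rw [h, abs_zero]; positivity
    · rw [hW, div_mul_cancel₀ _ hwmin.ne']
      exact (hbounds i (mem_Icc.1 hi).1 (mem_Icc.1 hi).2 h).2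
  have hx : ∀ k, r + k + 1 ≤ d → x (r + k + 1) = -(r * q ^ (k + 1)) := by
    intro k hk
    rw [hxneg _ (by omega) hk, show r + k + 1 - r = k + 1 by omega, neg_mul]
  have hsmall : |∑ i ∈ Icc 1 (r + n), x i * w i| ≤ c * (q ^ (n + 1) - 1) := by
    refine (abs_sum_le_sum_abs _ _).trans <| sum_abs_mul_Icc_le hwmin.le (by linarith)
      (by linarith) (fun i hi => ?_) (fun k hk => hx k (by omega))
      fun i hi => hw i (Icc_subset_Icc_right (by omega) hi)
    obtain ⟨hx0, hx1⟩ := hxbox i (mem_Icc.1 hi).1 (mem_Icc.1 hi).2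
    exact (abs_of_nonneg hx0).trans_le hx1
  have hlead : c * q ^ (n + 1) ≤ |x (r + n + 1) * w (r + n + 1)| := by
    rw [hx n hℓd, abs_mul, abs_neg, abs_of_pos (by positivity), mul_right_comm]
    gcongr
    exact (hbounds _ (by omega) hℓd hwℓ).1
  rw [sum_Icc_one_eq_add_of_eq_zero (a := fun i => x i * w i) hℓd
      fun i hi => by rw [hlargest i hi, mul_zero], add_comm, Real.sign_add_of_abs_lt,
    hx n hℓd, neg_mul, Real.sign_neg, Real.sign_mul_of_pos (by positivity)]
  linarith
end
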